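/- arXiv:0808.3081 — 2 statements merged into one kernel-verified Lean document; each statement's English description precedes it below -/
import Mathlib

section
/- Let g ≥ 1 and let B be a complex g×g matrix which is symmetric and whose imaginary part is positive definite. Then for all p, q, z ∈ ℂ^g the theta series, i.e. the family indexed by m ∈ ℤ^g with terms exp(πi⟨B(m+p), m+p⟩ + 2πi⟨z+q, m+p⟩), is absolutely summable (so the theta function Θ[p,q](z|B) is well defined). -/
open scoped BigOperators
open Matrix Complex

/-- The term of the theta series with characteristic `[p,q]`, argument `z`
and period matrix `B`, indexed by `m ∈ ℤ^g`:
`exp(πi⟨B(m+p), m+p⟩ + 2πi⟨z+q, m+p⟩)`. -/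
noncomputable def thetaTerm (g : ℕ) (B : Matrix (Fin g) (Fin g) ℂ)
    (p q z : Fin g → ℂ) (m : Fin g → ℤ) : ℂ :=
  Complex.exp ((Real.pi : ℂ) * Complex.I *
      (B.mulVec ((fun j => (m j : ℂ)) + p) ⬝ᵥ ((fun j => (m j : ℂ)) + p)) +
    2 * (Real.pi : ℂ) * Complex.I * ((z + q) ⬝ᵥ ((fun j => (m j : ℂ)) + p)))

/-- The theta function `Θ[p,q](z|B)`. -/
noncomputable def Theta (g : ℕ) (B : Matrix (Fin g) (Fin g) ℂ)
    (p q z : Fin g → ℂ) : ℂ :=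
  ∑' m : Fin g → ℤ, thetaTerm g B p q z m

/-- The imaginary part of `B` is positive definite as a real quadratic form. -/
def ImPosDef (g : ℕ) (B : Matrix (Fin g) (Fin g) ℂ) : Prop :=
  ∀ v : Fin g → ℝ, v ≠ 0 →
    0 < (Matrix.of fun j k => (B j k).im).mulVec v ⬝ᵥ v

/-!
Restricted to real points `x`, the exponent of a theta term has real part
`-π xᵀ (Im B) x + ⟨w, x⟩ + C`. Positive definiteness of `Im B` gives `xᵀ (Im B) x ≥ c ⟨x, x⟩`
for some `c > 0` (minimum on the unit sphere), so each term is dominated by a product over the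
coordinates of one-variable Gaussians `exp (-π c n² + w_j n)`, and these are summable over `ℤ`
as absolute values of terms of the Jacobi theta series.
-/

theorem exists_pos_mul_norm_sq_le {E : Type*} [NormedAddCommGroup E] [NormedSpace ℝ E]
    [ProperSpace E] {Q : E → ℝ} (hQ : Continuous Q) (hsmul : ∀ (t : ℝ) v, Q (t • v) = t ^ 2 * Q v)
    (hpos : ∀ v ≠ 0, 0 < Q v) : ∃ c > 0, ∀ v, c * ‖v‖ ^ 2 ≤ Q v := by
  have hQ0 : Q 0 = 0 := by simpa using hsmul 0 0
  have hunit : ∀ v ≠ (0 : E), ‖v‖⁻¹ • v ∈ Metric.sphere (0 : E) 1 := fun v hv => by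
    simp [norm_smul, hv]
  have hhom : ∀ v : E, Q v = ‖v‖ ^ 2 * Q (‖v‖⁻¹ • v) := fun v => by
    rcases eq_or_ne v 0 with rfl | hv
    · simp [hQ0]
    · rw [← hsmul, smul_smul, mul_inv_cancel₀ (norm_ne_zero_iff.mpr hv), one_smul]
  rcases (Metric.sphere (0 : E) 1).eq_empty_or_nonempty with hempty | hne
  · refine ⟨1, one_pos, fun v => ?_⟩
    obtain rfl : v = 0 := by
      by_contra hv
      simpa [hempty] using hunit v hv
    simp [hQ0]
  · obtain ⟨v₀, hv₀, hmin⟩ := (isCompact_sphere (0 : E) 1).exists_isMinOn hne hQ.continuousOn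
    refine ⟨Q v₀, hpos v₀ (ne_zero_of_mem_unit_sphere ⟨v₀, hv₀⟩), fun v => ?_⟩
    rcases eq_or_ne v 0 with rfl | hv
    · simp [hQ0]
    · rw [hhom v, mul_comm]
      gcongr
      exact hmin (hunit v hv)

theorem Matrix.exists_pos_mul_dotProduct_self_le {ι : Type*} [Fintype ι] (A : Matrix ι ι ℝ)
    (hA : ∀ v ≠ 0, 0 < A *ᵥ v ⬝ᵥ v) : ∃ c > 0, ∀ v, c * (v ⬝ᵥ v) ≤ A *ᵥ v ⬝ᵥ v := by
  obtain ⟨c, hc, hcQ⟩ := exists_pos_mul_norm_sq_le (E := EuclideanSpace ℝ ι)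
    (Q := fun v => A *ᵥ v.ofLp ⬝ᵥ v.ofLp) (by fun_prop)
    (fun t v => by simp only [WithLp.ofLp_smul, mulVec_smul, smul_dotProduct, dotProduct_smul,
      smul_eq_mul]; ring)
    (fun v hv => hA _ (by simpa using hv))
  refine ⟨c, hc, fun v => ?_⟩
  simpa [← sq, EuclideanSpace.real_norm_sq_eq, dotProduct] using hcQ (WithLp.toLp 2 v)

theorem summable_int_exp_neg_mul_sq_add_mul {c : ℝ} (hc : 0 < c) (w : ℝ) :
    Summable fun n : ℤ => Real.exp (-c * n ^ 2 + w * n) := by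
  have hτ : 0 < ((c / Real.pi : ℝ) * I : ℂ).im := by simpa using div_pos hc Real.pi_pos
  refine ((summable_jacobiTheta₂_term_iff (((-(w / (2 * Real.pi)) : ℝ) : ℂ) * I) _).mpr
    hτ).norm.congr fun n => ?_
  rw [norm_jacobiTheta₂_term]
  congr 1
  simp only [mul_im, ofReal_re, I_im, ofReal_im, I_re, mul_one, mul_zero, add_zero]
  field_simp
  ring

theorem summable_fin_prod_apply_of_nonneg {α : Type*} :
    ∀ {n : ℕ} {f : Fin n → α → ℝ}, (∀ i, 0 ≤ f i) → (∀ i, Summable (f i)) →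
      Summable fun x : Fin n → α => ∏ i, f i (x i)
  | 0, _, _, _ => .of_finite
  | n + 1, f, hf0, hf => by
    rw [← (Fin.consEquiv fun _ => α).summable_iff]
    have htail := summable_fin_prod_apply_of_nonneg (fun i => hf0 i.succ) fun i => hf i.succ
    simpa [Function.comp_def, Fin.prod_univ_succ] using
      (hf 0).mul_of_nonneg htail (hf0 0) fun x => Finset.prod_nonneg fun i _ => hf0 i.succ (x i)

theorem summable_prod_apply_of_nonneg {ι α : Type*} [Fintype ι] {f : ι → α → ℝ}
    (hf0 : ∀ i, 0 ≤ f i) (hf : ∀ i, Summable (f i)) :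
    Summable fun x : ι → α => ∏ i, f i (x i) := by
  let e := Fintype.equivFin ι
  rw [← (e.symm.arrowCongr (Equiv.refl α)).summable_iff]
  convert summable_fin_prod_apply_of_nonneg (f := fun k => f (e.symm k)) (fun _ => hf0 _)
    (fun _ => hf _) using 2 with x
  exact (e.symm.prod_comp fun i => f i (x (e i))).symm.trans (by simp)

theorem summable_exp_neg_quadratic_add_linear {ι : Type*} [Fintype ι] (A : Matrix ι ι ℝ)
    (hA : ∀ v ≠ 0, 0 < A *ᵥ v ⬝ᵥ v) (w : ι → ℝ) :
    Summable fun m : ι → ℤ =>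
      Real.exp (-(A *ᵥ (Int.cast ∘ m) ⬝ᵥ (Int.cast ∘ m)) + w ⬝ᵥ (Int.cast ∘ m)) := by
  obtain ⟨c, hc, hcA⟩ := A.exists_pos_mul_dotProduct_self_le hA
  refine .of_nonneg_of_le (fun _ => (Real.exp_pos _).le) (fun m => ?_)
    (summable_prod_apply_of_nonneg (fun i n => (Real.exp_pos _).le)
      fun i => summable_int_exp_neg_mul_sq_add_mul hc (w i))
  have hsum : ∑ i, (-c * (m i : ℝ) ^ 2 + w i * m i) =
      -(c * ((Int.cast ∘ m) ⬝ᵥ (Int.cast ∘ m))) + w ⬝ᵥ (Int.cast ∘ m) := by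
    simp only [dotProduct, Function.comp_apply, Finset.sum_add_distrib, Finset.mul_sum,
      ← Finset.sum_neg_distrib, sq, neg_mul]
  rw [← Real.exp_sum, hsum]
  gcongr
  exact hcA _

section
variable {ι : Type*} [Fintype ι]

theorem Complex.im_dotProduct_ofReal (u : ι → ℂ) (x : ι → ℝ) :
    (u ⬝ᵥ fun i => (x i : ℂ)).im = (fun i => (u i).im) ⬝ᵥ x := by
  simp [dotProduct, im_sum]

theorem Complex.im_mulVec_ofReal (M : Matrix ι ι ℂ) (x : ι → ℝ) (i : ι) :
    ((M *ᵥ fun j => (x j : ℂ)) i).im = ((Matrix.of fun j k => (M j k).im) *ᵥ x) i := by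
  simp [mulVec, dotProduct, im_sum]

end

theorem thetaTerm_eq_exp (g : ℕ) (B : Matrix (Fin g) (Fin g) ℂ) (p q z : Fin g → ℂ)
    (m : Fin g → ℤ) :
    thetaTerm g B p q z m = Complex.exp (Real.pi * I *
      (B *ᵥ (fun j => (m j : ℂ)) ⬝ᵥ (fun j => (m j : ℂ)) +
        (p ᵥ* B + B *ᵥ p + 2 • (z + q)) ⬝ᵥ (fun j => (m j : ℂ)) +
        (B *ᵥ p ⬝ᵥ p + 2 * ((z + q) ⬝ᵥ p)))) := by
  rw [thetaTerm]
  congr 1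
  simp only [mulVec_add, add_dotProduct, dotProduct_add, two_smul]
  rw [dotProduct_comm (B *ᵥ _) p, dotProduct_mulVec]
  ring

theorem exists_norm_thetaTerm_eq (g : ℕ) (B : Matrix (Fin g) (Fin g) ℂ) (p q z : Fin g → ℂ) :
    ∃ (w : Fin g → ℝ) (C : ℝ), ∀ m : Fin g → ℤ, ‖thetaTerm g B p q z m‖ =
      C * Real.exp (-((Real.pi • Matrix.of fun j k => (B j k).im) *ᵥ (Int.cast ∘ m) ⬝ᵥ
        (Int.cast ∘ m)) + w ⬝ᵥ (Int.cast ∘ m)) := by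
  refine ⟨-Real.pi • fun i => ((p ᵥ* B + B *ᵥ p + 2 • (z + q)) i).im,
    Real.exp (-Real.pi * (B *ᵥ p ⬝ᵥ p + 2 * ((z + q) ⬝ᵥ p)).im), fun m => ?_⟩
  have hcast : (fun j => (m j : ℂ)) = fun j => (((Int.cast ∘ m) j : ℝ) : ℂ) := by
    simp
  rw [thetaTerm_eq_exp, hcast, norm_exp, ← Real.exp_add, mul_assoc, re_ofReal_mul, I_mul_re]
  congr 1
  simp only [add_im, im_dotProduct_ofReal, im_mulVec_ofReal, smul_mulVec,
    smul_dotProduct, smul_eq_mul]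
  ring

theorem theta_series_absolutely_summable_general
    (g : ℕ) (B : Matrix (Fin g) (Fin g) ℂ)
    (hpos : ImPosDef g B) (p q z : Fin g → ℂ) :
    Summable (fun m : Fin g → ℤ => ‖thetaTerm g B p q z m‖) := by
  obtain ⟨w, C, hnorm⟩ := exists_norm_thetaTerm_eq g B p q z
  have hπpos : ∀ v ≠ 0, 0 < (Real.pi • Matrix.of fun j k => (B j k).im) *ᵥ v ⬝ᵥ v :=
    fun v hv => by
      simpa only [smul_mulVec, smul_dotProduct, smul_eq_mul] using
        mul_pos Real.pi_pos (hpos v hv)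
  simpa only [hnorm] using (summable_exp_neg_quadratic_add_linear _ hπpos w).mul_left C

/-- for `g ≥ 1` and `B` symmetric with positive definite imaginary
part, the theta series is absolutely summable. -/
theorem theta_series_absolutely_summable
    (g : ℕ) (hg : 1 ≤ g) (B : Matrix (Fin g) (Fin g) ℂ)
    (hB : B.IsSymm) (hpos : ImPosDef g B) (p q z : Fin g → ℂ) :
    Summable (fun m : Fin g → ℤ => ‖thetaTerm g B p q z m‖) :=
  theta_series_absolutely_summable_general g B hpos p q z
end

section
/- (Vanishing at the origin for odd characteristics.) Let g ≥ 1, let B be a symmetric complex g×g matrix whose imaginary part is positive definite, and let p, q ∈ ℂ^g be half-integer vectors (2p, 2q ∈ ℤ^g) such that the integer 4⟨p,q⟩ = 4∑_{j=1}^g p_j q_j is odd. Then Θ[p,q](0 | B) = 0. -/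
/-!
The substitution `m ↦ -2p - m` of the summation lattice replaces `v = m + p` by `-v`. The quadratic
part `⟨Bv, v⟩` is unchanged, while the linear part `2πi⟨q, v⟩` changes by `-4πi⟨q, v⟩`, an odd
multiple of `πi` because `4⟨q, v⟩ ≡ 4⟨p, q⟩ (mod 2)`. So every term is negated, and the series
equals its own negative; reindexing and negation commute with `tsum` unconditionally, so no
convergence argument enters.
-/

open scoped BigOperators
open Matrix Complex

theorem tsum_eq_zero_of_apply_sub_eq_neg {G E : Type*} [AddGroup G] [AddCommGroup E]
    [TopologicalSpace E] [IsTopologicalAddGroup E] [T2Space E] [IsAddTorsionFree E]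
    {f : G → E} (c : G) (hf : ∀ m, f (c - m) = -f m) : ∑' m, f m = 0 :=
  self_eq_neg.mp <| calc
    ∑' m, f m = ∑' m, f (Equiv.subLeft c m) := (Equiv.tsum_eq _ _).symm
    _ = ∑' m, -f m := tsum_congr hf
    _ = -∑' m, f m := tsum_neg

theorem Complex.exp_sub_int_mul_pi_mul_I_of_odd {k : ℤ} (hk : Odd k) (z : ℂ) :
    exp (z - k * (Real.pi * I)) = -exp z := by
  obtain ⟨n, rfl⟩ := hk
  convert (exp_antiperiodic.int_odd_mul_antiperiodic n).sub_eq z using 3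
  push_cast
  ring

section HalfIntegerCharacteristic

variable {g : ℕ} {p q : Fin g → ℂ} {a b : Fin g → ℤ}

theorem four_mul_dotProduct_intCast_add_of_two_mul_eq
    (hp : ∀ j, 2 * p j = (a j : ℂ)) (hq : ∀ j, 2 * q j = (b j : ℂ)) (m : Fin g → ℤ) :
    4 * (q ⬝ᵥ ((fun j => (m j : ℂ)) + p)) =
      ((2 * ∑ j, b j * m j + ∑ j, a j * b j : ℤ) : ℂ) := by
  simp only [dotProduct, Finset.mul_sum, ← Finset.sum_add_distrib]
  push_cast
  refine Finset.sum_congr rfl fun j _ => ?_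
  simp only [Pi.add_apply]
  linear_combination (2 * (m j : ℂ) + a j) * hq j + 2 * q j * hp j

theorem intCast_neg_sub_add_of_two_mul_eq (hp : ∀ j, 2 * p j = (a j : ℂ)) (m : Fin g → ℤ) :
    (fun j => ((-a - m) j : ℂ)) + p = -((fun j => (m j : ℂ)) + p) := by
  funext j
  simp only [Pi.add_apply, Pi.sub_apply, Pi.neg_apply]
  push_cast
  linear_combination hp j

theorem thetaTerm_zero_neg_sub_of_odd (B : Matrix (Fin g) (Fin g) ℂ)
    (hp : ∀ j, 2 * p j = (a j : ℂ)) (hq : ∀ j, 2 * q j = (b j : ℂ))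
    (hodd : Odd (∑ j, a j * b j)) (m : Fin g → ℤ) :
    thetaTerm g B p q 0 (-a - m) = -thetaTerm g B p q 0 m := by
  have hK : Odd (2 * ∑ j, b j * m j + ∑ j, a j * b j) := (even_two_mul _).add_odd hodd
  have h4 := four_mul_dotProduct_intCast_add_of_two_mul_eq hp hq m
  rw [thetaTerm, thetaTerm, intCast_neg_sub_add_of_two_mul_eq hp, mulVec_neg, neg_dotProduct,
    dotProduct_neg, neg_neg, zero_add, dotProduct_neg, ← exp_sub_int_mul_pi_mul_I_of_odd hK, ← h4]
  ring_nf

end HalfIntegerCharacteristic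

theorem theta_vanishes_at_origin_odd_characteristic_general
    (g : ℕ) (B : Matrix (Fin g) (Fin g) ℂ)
    (p q : Fin g → ℂ)
    (a b : Fin g → ℤ)
    (hp : ∀ j, 2 * p j = (a j : ℂ)) (hq : ∀ j, 2 * q j = (b j : ℂ))
    (hodd : Odd (∑ j, a j * b j)) :
    Theta g B p q 0 = 0 :=
  tsum_eq_zero_of_apply_sub_eq_neg (-a) (thetaTerm_zero_neg_sub_of_odd B hp hq hodd)

/-- vanishing of `Θ[p,q](0|B)` for odd half-integer
characteristics: if `2p = a`, `2q = b` with `a, b ∈ ℤ^g` and `∑ a_j b_j`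
(which equals `4⟨p,q⟩`) is odd, then `Θ[p,q](0 | B) = 0`. -/
theorem theta_vanishes_at_origin_odd_characteristic
    (g : ℕ) (hg : 1 ≤ g) (B : Matrix (Fin g) (Fin g) ℂ)
    (hB : B.IsSymm) (hpos : ImPosDef g B) (p q : Fin g → ℂ)
    (a b : Fin g → ℤ)
    (hp : ∀ j, 2 * p j = (a j : ℂ)) (hq : ∀ j, 2 * q j = (b j : ℂ))
    (hodd : Odd (∑ j, a j * b j)) :
    Theta g B p q 0 = 0 :=
  theta_vanishes_at_origin_odd_characteristic_general g B p q a b hp hq hodd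
end
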